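/- arXiv:1204.4144 — 3 statements merged into one kernel-verified Lean document; each statement's English description precedes it below -/
import Mathlib

section
/- Let H be a real inner product space, let u, z ∈ H, let β ∈ ℝ, and let s, R be real numbers with s > 0 and R ≥ 0. Then ‖u + β•z‖² + (1+β)²·s·‖z‖² + (1+β)²·R ≤ (max 2 ((1+β)² + 2β²/s)) · (‖u‖² + s·‖z‖² + R). (In the paper, u is a broken Sobolev function, z is the element-wise Riesz representative of the normal-flux functional K∇u·μ so that ‖z‖ equals the H^{-1/2}(∂E) norm of the flux, s = h^ν/p^θ is the flux-weight, R = σ(h^λ/p^ζ)·‖[K∇u·n]‖²_{L²(Γ_int)} is the weighted jump term, and the left-hand side is |||û|||² for the modified test function û = u + β·z; the factor sqrt(max 2 ((1+β)² + 2β²/s)) is the constant ξ₁ of Lemma 3.3.) -/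
/-- Lemma 3.3 (abstract form): `|||û||| ≤ ξ₁ |||u|||` for `û = u + β • z`. -/
theorem dg_norm_bound_modified_test_function
    {H : Type*} [NormedAddCommGroup H] [InnerProductSpace ℝ H]
    (u z : H) (β s R : ℝ) (hs : 0 < s) (hR : 0 ≤ R) :
    ‖u + β • z‖ ^ 2 + (1 + β) ^ 2 * s * ‖z‖ ^ 2 + (1 + β) ^ 2 * R ≤
      (max 2 ((1 + β) ^ 2 + 2 * β ^ 2 / s)) * (‖u‖ ^ 2 + s * ‖z‖ ^ 2 + R) := by
  set M := max 2 ((1 + β) ^ 2 + 2 * β ^ 2 / s) with hM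
  have h2 : (2 : ℝ) ≤ M := le_max_left _ _
  have h3 : (1 + β) ^ 2 + 2 * β ^ 2 / s ≤ M := le_max_right _ _
  have htri : ‖u + β • z‖ ≤ ‖u‖ + |β| * ‖z‖ := by
    simpa [norm_smul, Real.norm_eq_abs] using norm_add_le u (β • z)
  have hsq : ‖u + β • z‖ ^ 2 ≤ 2 * ‖u‖ ^ 2 + 2 * β ^ 2 * ‖z‖ ^ 2 := by
    nlinarith [norm_nonneg (u + β • z), norm_nonneg u, norm_nonneg z, abs_nonneg β,
      sq_abs β, sq_nonneg (‖u‖ - |β| * ‖z‖)]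
  have hflux : (1 + β) ^ 2 * s + 2 * β ^ 2 ≤ M * s := by
    have := mul_le_mul_of_nonneg_right h3 hs.le
    calc (1 + β) ^ 2 * s + 2 * β ^ 2 = ((1 + β) ^ 2 + 2 * β ^ 2 / s) * s := by
          field_simp
      _ ≤ M * s := this
  have hjump : (1 + β) ^ 2 ≤ M := by
    have : (1 + β) ^ 2 ≤ (1 + β) ^ 2 + 2 * β ^ 2 / s := le_add_of_nonneg_right (by positivity)
    linarith
  nlinarith [sq_nonneg ‖u‖, sq_nonneg ‖z‖, mul_le_mul_of_nonneg_right hjump hR,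
    mul_le_mul_of_nonneg_right hflux (sq_nonneg ‖z‖),
    mul_le_mul_of_nonneg_right h2 (sq_nonneg ‖u‖)]
end

section
/- Let H be a real inner product space, let u, z ∈ H, let β < 0 be real, let s > 0 and ρ > 0 be real, let J ≥ 0 be real, and let T₁, T₂ be real numbers satisfying T₁ ≥ -(|β|/4)·‖z‖² - (|β|/2)·J² and T₂ ≥ -(|β|/4)·‖u‖² - (|β|/2)·J². Then ‖u‖² + 2β·⟪u, z⟫ - β·‖z‖² + T₁ + T₂ + ρ·(1+β)·J² ≥ (min (min (1 - (9/4)·|β|) (|β|/(4s))) (1 - |β| - |β|/ρ)) · (‖u‖² + s·‖z‖² + ρ·J²). (In the paper, z is the element-wise Riesz representative of the flux functional K∇u·μ so that ‖z‖ equals the H^{-1/2}(∂E) norm of the flux, hence s·‖z‖² is the weighted flux term of |||u|||²; J = ‖[K∇u·n]‖_{L²(Γ_int)}; T₁ = β∫_{Γ_int}⟨z⟩[K∇u·n]ds and T₂ = -β∫_{Γ_int}⟨u⟩[K∇u·n]ds are the interface cross terms; the left-hand side is B(u, û) for û = u + β·z, and the min is the constant ξ₂ of Lemma 3.4.) -/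
/-!
Cauchy–Schwarz and Young bound the cross term by `2|β| ‖u‖² + (|β|/2) ‖z‖²`; together with the
assumed bounds on `T₁, T₂` this leaves the lower bound
`(1 - 9|β|/4) ‖u‖² + (|β|/4) ‖z‖² + (ρ - |β|ρ - |β|) J²`, whose coefficients relative to the
weights `1, s, ρ` of `‖u‖² + s‖z‖² + ρJ²` are exactly the three terms of the minimum.
-/

open scoped RealInnerProductSpace

theorem abs_real_inner_le_mul_sq_add_sq_div
    {H : Type*} [NormedAddCommGroup H] [InnerProductSpace ℝ H]
    (u z : H) {ε : ℝ} (hε : 0 < ε) :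
    |⟪u, z⟫| ≤ ε * ‖u‖ ^ 2 + ‖z‖ ^ 2 / (4 * ε) := by
  have young : ‖u‖ * ‖z‖ ≤ ε * ‖u‖ ^ 2 + ‖z‖ ^ 2 / (4 * ε) := by
    rw [← sub_nonneg]
    have key : ε * ‖u‖ ^ 2 + ‖z‖ ^ 2 / (4 * ε) - ‖u‖ * ‖z‖ = (2 * ε * ‖u‖ - ‖z‖) ^ 2 / (4 * ε) := by
      field_simp
      ring
    rw [key]
    positivity
  exact (abs_real_inner_le_norm u z).trans young

theorem min_min_mul_add_add_le {R : Type*} [Semiring R] [LinearOrder R] [IsOrderedRing R]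
    (a₁ a₂ a₃ : R) {x₁ x₂ x₃ : R} (h₁ : 0 ≤ x₁) (h₂ : 0 ≤ x₂) (h₃ : 0 ≤ x₃) :
    min (min a₁ a₂) a₃ * (x₁ + x₂ + x₃) ≤ a₁ * x₁ + a₂ * x₂ + a₃ * x₃ := by
  rw [mul_add, mul_add]
  gcongr
  · exact (min_le_left _ _).trans (min_le_left _ _)
  · exact (min_le_left _ _).trans (min_le_right _ _)
  · exact min_le_right _ _

theorem coercivity_on_modified_test_function_general
    {H : Type*} [NormedAddCommGroup H] [InnerProductSpace ℝ H]
    (u z : H) (β s ρ J T₁ T₂ : ℝ)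
    (hβ : β < 0) (hs : 0 < s) (hρ : 0 < ρ)
    (hT₁ : T₁ ≥ -(|β| / 4) * ‖z‖ ^ 2 - (|β| / 2) * J ^ 2)
    (hT₂ : T₂ ≥ -(|β| / 4) * ‖u‖ ^ 2 - (|β| / 2) * J ^ 2) :
    ‖u‖ ^ 2 + 2 * β * ⟪u, z⟫ - β * ‖z‖ ^ 2 + T₁ + T₂ + ρ * (1 + β) * J ^ 2 ≥
      (min (min (1 - (9 / 4) * |β|) (|β| / (4 * s))) (1 - |β| - |β| / ρ)) *
        (‖u‖ ^ 2 + s * ‖z‖ ^ 2 + ρ * J ^ 2) := by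
  have hb : |β| = -β := abs_of_neg hβ
  have cross : -2 * |β| * ‖u‖ ^ 2 - |β| / 2 * ‖z‖ ^ 2 ≤ 2 * β * ⟪u, z⟫ := by
    have inner_le := le_of_abs_le (abs_real_inner_le_mul_sq_add_sq_div u z one_pos)
    have scaled := mul_le_mul_of_nonneg_left inner_le (by positivity : 0 ≤ 2 * |β|)
    rw [hb] at scaled ⊢
    linarith
  have weight_s : |β| / (4 * s) * (s * ‖z‖ ^ 2) = |β| / 4 * ‖z‖ ^ 2 := by
    field_simp
  have weight_ρ : (1 - |β| - |β| / ρ) * (ρ * J ^ 2) = (ρ - |β| * ρ - |β|) * J ^ 2 := by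
    field_simp
  calc _ ≤ (1 - 9 / 4 * |β|) * ‖u‖ ^ 2 + |β| / (4 * s) * (s * ‖z‖ ^ 2)
          + (1 - |β| - |β| / ρ) * (ρ * J ^ 2) :=
        min_min_mul_add_add_le _ _ _ (by positivity) (by positivity) (by positivity)
    _ ≤ _ := by
        rw [weight_s, weight_ρ]
        rw [hb] at hT₁ hT₂ cross ⊢
        linarith

/-- Lemma 3.4 (abstract form): coercivity `B(u, û) ≥ ξ₂ |||u|||²` on the modified
test function `û = u + β • z`, with `β < 0`. -/
theorem coercivity_on_modified_test_function
    {H : Type*} [NormedAddCommGroup H] [InnerProductSpace ℝ H]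
    (u z : H) (β s ρ J T₁ T₂ : ℝ)
    (hβ : β < 0) (hs : 0 < s) (hρ : 0 < ρ) (hJ : 0 ≤ J)
    (hT₁ : T₁ ≥ -(|β| / 4) * ‖z‖ ^ 2 - (|β| / 2) * J ^ 2)
    (hT₂ : T₂ ≥ -(|β| / 4) * ‖u‖ ^ 2 - (|β| / 2) * J ^ 2) :
    ‖u‖ ^ 2 + 2 * β * ⟪u, z⟫ - β * ‖z‖ ^ 2 + T₁ + T₂ + ρ * (1 + β) * J ^ 2 ≥
      (min (min (1 - (9 / 4) * |β|) (|β| / (4 * s))) (1 - |β| - |β| / ρ)) *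
        (‖u‖ ^ 2 + s * ‖z‖ ^ 2 + ρ * J ^ 2) :=
  coercivity_on_modified_test_function_general u z β s ρ J T₁ T₂ hβ hs hρ hT₁ hT₂
end

section
/- For every real t with 0 < t < 1, setting β = 2·t/5 one has: (i) min (min (1 - (9/4)·β) (β/(4·t))) (1 - β - β/t) ≥ 1/10; (ii) Real.sqrt (max 2 ((1+β)² + 2·β²/t)) ≤ Real.sqrt 228 / 10; and consequently (iii) the quotient of the value in (i) by the value in (ii) is ≥ 1/Real.sqrt 228. In particular, when λ = ν, θ = ζ, σ = 1 and the mesh weight t = h^λ/p^ζ satisfies t < 1, the inf-sup constant γ = ξ₂/ξ₁ obtained from Lemmas 3.3 and 3.4 with |β| = 2t/5 is bounded below by the absolute constant 1/√228, independent of h and p. -/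
namespace InfSup

/-- The constant `ξ₂` of Lemma 3.4 for `σ = 1`, `λ = ν`, `θ = ζ`, as a function of the mesh weight
`t = h^λ/p^ζ` and of `β`. -/
noncomputable def xi₂ (t β : ℝ) : ℝ :=
  min (min (1 - (9 / 4) * β) (β / (4 * t))) (1 - β - β / t)

/-- The constant `ξ₁` of Lemma 3.3 in the same setting. -/
noncomputable def xi₁ (t β : ℝ) : ℝ :=
  √(max 2 ((1 + β) ^ 2 + 2 * β ^ 2 / t))

theorem xi₁_pos (t β : ℝ) : 0 < xi₁ t β :=
  Real.sqrt_pos.mpr (two_pos.trans_le (le_max_left _ _))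

variable {t : ℝ}

theorem one_tenth_le_xi₂ (ht0 : 0 < t) (ht1 : t ≤ 1) : 1 / 10 ≤ xi₂ t (2 * t / 5) := by
  have hquarter : 2 * t / 5 / (4 * t) = 1 / 10 := by field_simp; norm_num
  have hratio : 2 * t / 5 / t = 2 / 5 := by field_simp
  refine le_min (le_min (by linarith) hquarter.ge) ?_
  rw [hratio]
  linarith

theorem xi₁_le (ht0 : 0 < t) (ht1 : t ≤ 1) : xi₁ t (2 * t / 5) ≤ √228 / 10 := by
  have hsq : 2 * (2 * t / 5) ^ 2 / t = 8 / 25 * t := by field_simp; ring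
  -- The bound is attained at `t = 1`: `(7/5)^2 + 8/25 = 228/100`.
  have hmax : max 2 ((1 + 2 * t / 5) ^ 2 + 2 * (2 * t / 5) ^ 2 / t) ≤ 228 / 100 :=
    max_le (by norm_num) (by rw [hsq]; nlinarith)
  calc xi₁ t (2 * t / 5) ≤ √(228 / 100) := Real.sqrt_le_sqrt hmax
    _ = √228 / 10 := by
      rw [Real.sqrt_div' _ (by norm_num : (0 : ℝ) ≤ 100),
        show (100 : ℝ) = 10 ^ 2 by norm_num, Real.sqrt_sq (by norm_num)]

end InfSup

open InfSup in
/-- Corollary 3.2: with `σ = 1`, `λ = ν`, `θ = ζ` and mesh weight `t = h^λ/p^ζ < 1`,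
choosing `β = 2t/5` the inf-sup constant `γ = ξ₂/ξ₁` is bounded below by `1/√228`. -/
theorem inf_sup_constant_bounded (t : ℝ) (ht0 : 0 < t) (ht1 : t < 1) (β : ℝ)
    (hβ : β = 2 * t / 5) :
    min (min (1 - (9 / 4) * β) (β / (4 * t))) (1 - β - β / t) ≥ 1 / 10 ∧
    Real.sqrt (max 2 ((1 + β) ^ 2 + 2 * β ^ 2 / t)) ≤ Real.sqrt 228 / 10 ∧
    (min (min (1 - (9 / 4) * β) (β / (4 * t))) (1 - β - β / t)) /
        Real.sqrt (max 2 ((1 + β) ^ 2 + 2 * β ^ 2 / t)) ≥ 1 / Real.sqrt 228 := by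
  subst hβ
  have hxi₂ : 1 / 10 ≤ xi₂ t (2 * t / 5) := one_tenth_le_xi₂ ht0 ht1.le
  have hxi₁ : xi₁ t (2 * t / 5) ≤ √228 / 10 := xi₁_le ht0 ht1.le
  refine ⟨hxi₂, hxi₁, ?_⟩
  calc 1 / √228 = (1 / 10) / (√228 / 10) := by field_simp
    _ ≤ xi₂ t (2 * t / 5) / xi₁ t (2 * t / 5) :=
      div_le_div₀ ((by positivity : (0 : ℝ) ≤ 1 / 10).trans hxi₂) hxi₂ (xi₁_pos _ _) hxi₁
end
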